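/- Let n, m ∈ ℕ, let f : ℝⁿ → ℝⁿ, g : ℝⁿ → ℝ^{n×m}, and u : ℝⁿ → ℝᵐ, and let h : ℝⁿ → ℝ be continuously differentiable. Let α : ℝ → ℝ be an extended class K∞ function (continuous, strictly increasing, with α(0) = 0). Suppose that for every x ∈ ℝⁿ, ⟨∇h(x), f(x) + g(x)·u(x)⟩ ≥ -α(h(x)). Then for every T ≥ 0 and every differentiable trajectory x : ℝ → ℝⁿ satisfying x'(t) = f(x(t)) + g(x(t))·u(x(t)) for all t ∈ [0, T] and h(x(0)) ≥ 0, it holds that h(x(t)) ≥ 0 for all t ∈ [0, T]; i.e., the 0-superlevel set S = {x : h(x) ≥ 0} is forward invariant under the closed-loop dynamics. -/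

import Mathlib

/-! Along a closed-loop trajectory `x`, the function `y = h ∘ x` satisfies `y' ≥ -α y`, and
`-α y > 0` wherever `y < 0`, so `y` increases strictly while it is negative. If `y t₀ < 0`, take
the last time `s ≤ t₀` with `y s ≥ 0`: `y` is negative on `(s, t₀]`, hence increasing there,
which gives `y t₀ > y s ≥ 0`. -/

open Set

theorem nonneg_of_deriv_pos_of_neg {y : ℝ → ℝ} {a b : ℝ} (hy : ContinuousOn y (Icc a b))
    (hya : 0 ≤ y a) (hderiv : ∀ t ∈ Ioo a b, y t < 0 → 0 < deriv y t) :
    ∀ t ∈ Icc a b, 0 ≤ y t := by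
  intro t₀ ht₀
  by_contra! hneg
  set A : Set ℝ := Icc a t₀ ∩ y ⁻¹' Ici 0
  have hAclosed : IsClosed A :=
    (hy.mono (Icc_subset_Icc_right ht₀.2)).preimage_isClosed_of_isClosed isClosed_Icc isClosed_Ici
  have hAbdd : BddAbove A := ⟨t₀, fun t ht => ht.1.2⟩
  obtain ⟨⟨has, hst₀⟩, hys⟩ : sSup A ∈ A :=
    hAclosed.csSup_mem ⟨a, ⟨le_rfl, ht₀.1⟩, hya⟩ hAbdd
  set s := sSup A
  have hslt : s < t₀ := hst₀.lt_of_ne fun hst => (hst ▸ hneg).not_ge hys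
  have hyneg : ∀ t ∈ Ioc s t₀, y t < 0 := fun t ht => by
    by_contra! hyt
    exact (le_csSup hAbdd ⟨⟨has.trans ht.1.le, ht.2⟩, hyt⟩).not_gt ht.1
  have hmono : StrictMonoOn y (Icc s t₀) := by
    refine strictMonoOn_of_deriv_pos (convex_Icc s t₀)
      (hy.mono (Icc_subset_Icc has ht₀.2)) fun t ht => ?_
    rw [interior_Icc] at ht
    exact hderiv t ⟨has.trans_lt ht.1, ht.2.trans_le ht₀.2⟩ (hyneg t ⟨ht.1, ht.2.le⟩)
  exact (hmono ⟨le_rfl, hslt.le⟩ ⟨hslt.le, le_rfl⟩ hslt).not_ge (hneg.le.trans hys)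

theorem nonneg_of_deriv_ge_neg_of_strictMono {y α : ℝ → ℝ} {a b : ℝ}
    (hy : ContinuousOn y (Icc a b)) (hya : 0 ≤ y a) (hαmono : StrictMono α) (hα0 : α 0 = 0)
    (hderiv : ∀ t ∈ Ioo a b, -α (y t) ≤ deriv y t) :
    ∀ t ∈ Icc a b, 0 ≤ y t := by
  refine nonneg_of_deriv_pos_of_neg hy hya fun t ht hyt => ?_
  have : α (y t) < 0 := hα0 ▸ hαmono hyt
  linarith [hderiv t ht]

theorem cbf_forward_invariance_general
    (n m : ℕ)
    (f : (Fin n → ℝ) → (Fin n → ℝ))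
    (g : (Fin n → ℝ) → Matrix (Fin n) (Fin m) ℝ)
    (u : (Fin n → ℝ) → (Fin m → ℝ))
    (h : (Fin n → ℝ) → ℝ) (hh : ContDiff ℝ 1 h)
    (α : ℝ → ℝ) (hαmono : StrictMono α) (hα0 : α 0 = 0)
    (hcbf : ∀ x : Fin n → ℝ, fderiv ℝ h x (f x + (g x).mulVec (u x)) ≥ -α (h x)) :
    ∀ (T : ℝ), 0 ≤ T →
      ∀ x : ℝ → (Fin n → ℝ), Differentiable ℝ x →
        (∀ t ∈ Set.Icc (0 : ℝ) T, deriv x t = f (x t) + (g (x t)).mulVec (u (x t))) →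
        h (x 0) ≥ 0 →
        ∀ t ∈ Set.Icc (0 : ℝ) T, x t ∈ {y : Fin n → ℝ | h y ≥ 0} := by
  intro T _ x hx hode h0
  have hdh : Differentiable ℝ h := hh.differentiable one_ne_zero
  have hderiv : ∀ t ∈ Ioo 0 T, -α (h (x t)) ≤ deriv (h ∘ x) t := fun t ht => by
    rw [((hdh (x t)).hasFDerivAt.comp_hasDerivAt t (hx t).hasDerivAt).deriv,
      hode t (Ioo_subset_Icc_self ht)]
    exact hcbf (x t)
  exact nonneg_of_deriv_ge_neg_of_strictMono (hdh.continuous.comp hx.continuous).continuousOn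
    h0 hαmono hα0 hderiv

/-- CBF forward invariance (Theorem 1): for the control-affine system
`ẋ = f x + g x * u x` with continuously differentiable barrier `h` and extended class K∞
function `α`, if `⟨∇h x, f x + g x ⬝ u x⟩ ≥ -α (h x)` for all `x`, then along every
closed-loop trajectory starting in `S = {x | h x ≥ 0}`, the state stays in `S`. -/
theorem cbf_forward_invariance
    (n m : ℕ)
    (f : (Fin n → ℝ) → (Fin n → ℝ))
    (g : (Fin n → ℝ) → Matrix (Fin n) (Fin m) ℝ)
    (u : (Fin n → ℝ) → (Fin m → ℝ))
    (h : (Fin n → ℝ) → ℝ) (hh : ContDiff ℝ 1 h)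
    (α : ℝ → ℝ) (hαc : Continuous α) (hαmono : StrictMono α) (hα0 : α 0 = 0)
    (hcbf : ∀ x : Fin n → ℝ, fderiv ℝ h x (f x + (g x).mulVec (u x)) ≥ -α (h x)) :
    ∀ (T : ℝ), 0 ≤ T →
      ∀ x : ℝ → (Fin n → ℝ), Differentiable ℝ x →
        (∀ t ∈ Set.Icc (0 : ℝ) T, deriv x t = f (x t) + (g (x t)).mulVec (u (x t))) →
        h (x 0) ≥ 0 →
        ∀ t ∈ Set.Icc (0 : ℝ) T, x t ∈ {y : Fin n → ℝ | h y ≥ 0} :=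
  cbf_forward_invariance_general n m f g u h hh α hαmono hα0 hcbf
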